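/- Let φ : {0,1}ⁿ → {0,1}ᴺ be an isometric embedding of the Hamming metric into the edit metric, with η : [n] → [N] the (input-independent) function mapping each input index to the output index it controls. Then for all x, y ∈ {0,1}ⁿ and all i ∈ [n], φ(x)[η(i)] = φ(y)[η(i)] if and only if x[i] = y[i]. -/

import Mathlib

/-- Levenshtein distance with unit costs (replaces Mathlib's removed
`levenshtein Levenshtein.defaultCost`, via its defining recurrence). -/
def levenshteinUnit {α : Type*} [DecidableEq α] : List α → List α → ℕ
  | [], ys => ys.length
  | x :: xs, [] => xs.length + 1
  | x :: xs, y :: ys =>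
      min (levenshteinUnit xs (y :: ys) + 1)
        (min (levenshteinUnit (x :: xs) ys + 1)
          ((if x = y then 0 else 1) + levenshteinUnit xs ys))

/-- Edit (Levenshtein) distance between two lists. -/
def editDist {α : Type*} [DecidableEq α] (x y : List α) : ℕ :=
  levenshteinUnit x y

/-- Flip the `i`-th bit of a binary string. -/
def flipBit {n : ℕ} (x : Fin n → Bool) (i : Fin n) : Fin n → Bool :=
  Function.update x i (!x i)

theorem stmt_9 {n N : ℕ} (φ : (Fin n → Bool) → (Fin N → Bool))
    (hiso : ∀ x y : Fin n → Bool,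
      editDist (List.ofFn (φ x)) (List.ofFn (φ y)) = hammingDist x y)
    (η : Fin n → Fin N)
    (hη : ∀ (x : Fin n → Bool) (i : Fin n),
      φ (flipBit x i) = Function.update (φ x) (η i) (!(φ x (η i)))) :
    ∀ (x y : Fin n → Bool) (i : Fin n), (φ x (η i) = φ y (η i) ↔ x i = y i) := by
  have hinj : Function.Injective η := by
    intro i j hij
    by_contra hne
    set x : Fin n → Bool := fun _ => false with hx
    set y := flipBit (flipBit x i) j with hy
    have hφ : φ y = φ x := by
      rw [hy, hη, hη, ← hij]
      simp [Function.update_idem, Function.update_eq_self]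
    have h0 : hammingDist y x = 0 := by
      have h1 := hiso y x
      rw [hφ] at h1
      have h2 := hiso x x
      rw [h2, hammingDist_self] at h1
      exact h1.symm
    have hxy : y = x := hammingDist_eq_zero.mp h0
    have hyi : y i = !(x i) := by
      rw [hy]
      show Function.update (flipBit x i) j (!(flipBit x i j)) i = !(x i)
      rw [Function.update_of_ne hne]
      simp [flipBit]
    rw [hxy] at hyi
    simp at hyi
  suffices key : ∀ d (x y : Fin n → Bool), hammingDist x y = d →
      ∀ i, (φ x (η i) = φ y (η i) ↔ x i = y i) by
    intro x y i; exact key _ x y rfl i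
  intro d
  induction d using Nat.strong_induction_on with
  | _ d ih =>
    intro x y hd i
    rcases Nat.eq_zero_or_pos d with h0 | hpos
    · subst h0
      have hxy : x = y := hammingDist_eq_zero.mp hd
      subst hxy; simp
    · have hne : x ≠ y := by
        intro h; subst h; rw [hammingDist_self] at hd; omega
      obtain ⟨j, hj⟩ := Function.ne_iff.mp hne
      set y' := flipBit y j with hy'
      have hxy'j : x j = y' j := by
        simp only [hy', flipBit, Function.update_self]
        cases hxj : x j <;> cases hyj : y j <;> simp_all
      have hsubset : (Finset.univ.filter fun k => x k ≠ y' k) ⊆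
          (Finset.univ.filter fun k => x k ≠ y k) := by
        intro k hk
        simp only [Finset.mem_filter, Finset.mem_univ, true_and] at hk ⊢
        by_cases hkj : k = j
        · subst hkj; exact absurd hxy'j hk
        · have : y' k = y k := by
            simp only [hy', flipBit]; rw [Function.update_of_ne hkj]
          rwa [this] at hk
      have hlt : hammingDist x y' < d := by
        rw [← hd]
        simp only [hammingDist]
        apply Finset.card_lt_card
        rw [Finset.ssubset_iff_of_subset hsubset]
        exact ⟨j, by simpa using hj, by simpa using hxy'j⟩
      have hIH := ih _ hlt x y' rfl
      by_cases hij : i = j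
      · subst hij
        have h2 : φ x (η i) = φ y' (η i) := (hIH i).mpr hxy'j
        rw [hy', hη, Function.update_self] at h2
        rw [h2]
        constructor
        · intro h; cases hv : φ y (η i) <;> rw [hv] at h <;> simp at h
        · intro h; exact absurd h hj
      · have hηij : η i ≠ η j := fun h => hij (hinj h)
        have h1 : φ y' (η i) = φ y (η i) := by
          rw [hy', hη, Function.update_of_ne hηij]
        have h2 : y' i = y i := by
          simp only [hy', flipBit]; rw [Function.update_of_ne hij]
        rw [← h1, ← h2]
        exact hIH i
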